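/- Let Z be a Hilbert space, M dissipative with μI − M bijective for μ > 0, N ∈ L(Z) skew-symmetric, and suppose z solves (M+N)z = g. For the Peaceman-Rachford iterates z^i with Δz^i = z − z^i and Δf^i = (μI − M)Δz^i, it holds that 0 ≤ −Re⟨Δz^i, M Δz^i⟩ ≤ (1/(4μ))(‖Δf^i‖² − ‖Δf^{i+1}‖²); consequently Re⟨Δz^i, M Δz^i⟩ → 0 as i → ∞. -/

import Mathlib

/-!
The Cayley transform `(μ + N)(μ − N)⁻¹` of a skew-symmetric `N` is an isometry, and the error
recursion of the Peaceman–Rachford iteration reads `Δfⁱ⁺¹ = (μ + N)(μ − N)⁻¹ (μ + M) Δzⁱ`.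
Hence `‖Δfⁱ⁺¹‖ = ‖(μ + M)Δzⁱ‖`, and the polarization identity
`‖(μ + M)x‖² − ‖(μ − M)x‖² = 4μ Re⟨x, Mx⟩` turns the dissipativity of `M` into an exact energy
decrease `‖Δfⁱ‖² − ‖Δfⁱ⁺¹‖² = −4μ Re⟨Δzⁱ, MΔzⁱ⟩ ≥ 0`. Telescoping makes the dissipation terms
summable, so they tend to zero.
-/

open Filter

/-- The residual `Δfⁱ = (μI − M)(z − zⁱ)` of the Peaceman–Rachford iteration. -/
noncomputable def deltaF {Z : Type*} [NormedAddCommGroup Z] [InnerProductSpace ℂ Z]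
    {dom : Submodule ℂ Z} (M : dom →ₗ[ℂ] Z) (μ : ℝ) (z : dom) (zseq : ℕ → dom)
    (i : ℕ) : Z :=
  (μ : ℂ) • ((z - zseq i : dom) : Z) - M (z - zseq i)

section InnerProduct
variable {𝕜 E : Type*} [RCLike 𝕜] [NormedAddCommGroup E] [InnerProductSpace 𝕜 E]

lemma norm_smul_add_sq_sub_norm_smul_sub_sq (μ : ℝ) (x y : E) :
    ‖(μ : 𝕜) • x + y‖ ^ 2 - ‖(μ : 𝕜) • x - y‖ ^ 2 = 4 * μ * RCLike.re (inner 𝕜 x y) := by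
  rw [norm_add_sq (𝕜 := 𝕜), norm_sub_sq (𝕜 := 𝕜), inner_smul_left, RCLike.conj_ofReal,
    RCLike.re_ofReal_mul]
  ring

lemma re_inner_self_apply_eq_zero_of_skew {N : E → E}
    (hN : ∀ x y, inner 𝕜 (N x) y = -inner 𝕜 x (N y)) (u : E) :
    RCLike.re (inner 𝕜 u (N u)) = 0 := by
  have h := congrArg RCLike.re (hN u u)
  rw [inner_re_symm, map_neg] at h
  linarith

lemma norm_smul_add_sq_eq_norm_smul_sub_sq_of_skew {N : E → E}
    (hN : ∀ x y, inner 𝕜 (N x) y = -inner 𝕜 x (N y)) (μ : ℝ) (u : E) :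
    ‖(μ : 𝕜) • u + N u‖ ^ 2 = ‖(μ : 𝕜) • u - N u‖ ^ 2 := by
  have h := norm_smul_add_sq_sub_norm_smul_sub_sq (𝕜 := 𝕜) μ u (N u)
  rw [re_inner_self_apply_eq_zero_of_skew hN, mul_zero] at h
  linarith

end InnerProduct

lemma summable_of_le_mul_sub_succ {a r : ℕ → ℝ} {C : ℝ} (hC : 0 ≤ C) (ha : ∀ i, 0 ≤ a i)
    (hr : ∀ i, 0 ≤ r i) (h : ∀ i, r i ≤ C * (a i - a (i + 1))) : Summable r := by
  refine summable_of_sum_range_le hr (c := C * a 0) fun n => ?_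
  calc ∑ i ∈ Finset.range n, r i ≤ ∑ i ∈ Finset.range n, C * (a i - a (i + 1)) :=
        Finset.sum_le_sum fun i _ => h i
    _ = C * (a 0 - a n) := by rw [← Finset.mul_sum, Finset.sum_range_sub']
    _ ≤ C * a 0 := by nlinarith [ha n]

section PeacemanRachford
variable {Z : Type*} [NormedAddCommGroup Z] [InnerProductSpace ℂ Z] {dom : Submodule ℂ Z}

/-- The map `F(x) = (μ − M)⁻¹[(μ + N)(μ − N)⁻¹(μ + M)x − ((μ + N)(μ − N)⁻¹ + I)g]`, with the
resolvents `(μ − M)⁻¹`, `(μ − N)⁻¹` given as right inverses `Minv`, `Ninv`. -/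
def peacemanRachfordStep (M : dom →ₗ[ℂ] Z) (N : Z →L[ℂ] Z) (g : Z) (μ : ℝ) (Minv : Z → dom)
    (Ninv : Z → Z) (x : dom) : dom :=
  Minv (((μ : ℂ) • Ninv ((μ : ℂ) • (x : Z) + M x) + N (Ninv ((μ : ℂ) • (x : Z) + M x)))
    - (((μ : ℂ) • Ninv g + N (Ninv g)) + g))

lemma norm_sq_residual_peacemanRachfordStep {M : dom →ₗ[ℂ] Z} {N : Z →L[ℂ] Z} {g : Z}
    {μ : ℝ} {Minv : Z → dom} {Ninv : Z → Z} {z : dom}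
    (hskew : ∀ x y : Z, inner ℂ (N x) y = -inner ℂ x (N y))
    (hMinv : ∀ y : Z, (μ : ℂ) • (Minv y : Z) - M (Minv y) = y)
    (hNinv : ∀ y : Z, (μ : ℂ) • Ninv y - N (Ninv y) = y) (hz : M z + N z = g) (x : dom) :
    ‖(μ : ℂ) • ((z - peacemanRachfordStep M N g μ Minv Ninv x : dom) : Z)
        - M (z - peacemanRachfordStep M N g μ Minv Ninv x)‖ ^ 2
      = ‖(μ : ℂ) • ((z - x : dom) : Z) + M (z - x)‖ ^ 2 := by
  set p : Z := (μ : ℂ) • (x : Z) + M x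
  -- `w = (μ − N)⁻¹(μ + M)(z − x)`, computed from `(μ − N)z = (μ + M)z − g`
  set w : Z := z + Ninv g - Ninv p
  set y : Z := ((μ : ℂ) • Ninv p + N (Ninv p)) - (((μ : ℂ) • Ninv g + N (Ninv g)) + g)
  have hw : (μ : ℂ) • w - N w = (μ : ℂ) • ((z - x : dom) : Z) + M (z - x) := by
    simp only [w, p, map_add, map_sub, Submodule.coe_sub]
    linear_combination (norm := module) hNinv g - hNinv p - hz
  have hstep : (μ : ℂ) • ((z - peacemanRachfordStep M N g μ Minv Ninv x : dom) : Z)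
        - M (z - peacemanRachfordStep M N g μ Minv Ninv x) = (μ : ℂ) • w + N w := by
    rw [show peacemanRachfordStep M N g μ Minv Ninv x = Minv y from rfl]
    simp only [w, map_add, map_sub, Submodule.coe_sub]
    linear_combination (norm := module) -hMinv y - hz
  rw [hstep, ← hw]
  exact norm_smul_add_sq_eq_norm_smul_sub_sq_of_skew hskew μ w

end PeacemanRachford

theorem stmt7_general {Z : Type*} [NormedAddCommGroup Z] [InnerProductSpace ℂ Z]
    (dom : Submodule ℂ Z) (M : dom →ₗ[ℂ] Z) (N : Z →L[ℂ] Z) (g : Z)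
    (μ : ℝ) (hμ : 0 < μ)
    (hdiss : ∀ x : dom, (inner ℂ ((x : Z)) (M x) : ℂ).re ≤ 0)
    (hskew : ∀ x y : Z, (inner ℂ (N x) y : ℂ) = -(inner ℂ x (N y) : ℂ))
    (Minv : Z → dom)
    (hMinv : ∀ y : Z, (μ : ℂ) • ((Minv y : dom) : Z) - M (Minv y) = y)
    (Ninv : Z → Z)
    (hNinv : ∀ y : Z, (μ : ℂ) • (Ninv y) - N (Ninv y) = y)
    (z : dom) (hz : M z + N z = g)
    (zseq : ℕ → dom)
    (hiter : ∀ i : ℕ, zseq (i + 1) =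
      Minv (((μ : ℂ) • Ninv ((μ : ℂ) • ((zseq i : dom) : Z) + M (zseq i))
            + N (Ninv ((μ : ℂ) • ((zseq i : dom) : Z) + M (zseq i))))
          - (((μ : ℂ) • Ninv g + N (Ninv g)) + g))) :
    (∀ i : ℕ,
        0 ≤ -(inner ℂ (((z - zseq i : dom) : Z)) (M (z - zseq i)) : ℂ).re ∧
        -(inner ℂ (((z - zseq i : dom) : Z)) (M (z - zseq i)) : ℂ).re ≤
          (1 / (4 * μ)) *
            (‖deltaF M μ z zseq i‖ ^ 2 - ‖deltaF M μ z zseq (i + 1)‖ ^ 2)) ∧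
      Tendsto (fun i => (inner ℂ (((z - zseq i : dom) : Z)) (M (z - zseq i)) : ℂ).re)
        atTop (nhds 0) := by
  set r : ℕ → ℝ := fun i => -(inner ℂ (((z - zseq i : dom) : Z)) (M (z - zseq i)) : ℂ).re
  have hr_nonneg (i : ℕ) : 0 ≤ r i := neg_nonneg.mpr (hdiss _)
  have hdecay (i : ℕ) :
      ‖deltaF M μ z zseq i‖ ^ 2 - ‖deltaF M μ z zseq (i + 1)‖ ^ 2 = 4 * μ * r i := by
    have hpolar : ‖(μ : ℂ) • ((z - zseq i : dom) : Z) + M (z - zseq i)‖ ^ 2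
        - ‖(μ : ℂ) • ((z - zseq i : dom) : Z) - M (z - zseq i)‖ ^ 2
          = 4 * μ * (inner ℂ ((z - zseq i : dom) : Z) (M (z - zseq i))).re :=
      norm_smul_add_sq_sub_norm_smul_sub_sq μ _ _
    have hstep : ‖deltaF M μ z zseq (i + 1)‖ ^ 2
        = ‖(μ : ℂ) • ((z - zseq i : dom) : Z) + M (z - zseq i)‖ ^ 2 := by
      rw [deltaF, hiter i]
      exact norm_sq_residual_peacemanRachfordStep hskew hMinv hNinv hz (zseq i)
    rw [hstep, deltaF]
    simp only [r]
    linarith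
  have hr_eq (i : ℕ) :
      r i = 1 / (4 * μ) * (‖deltaF M μ z zseq i‖ ^ 2 - ‖deltaF M μ z zseq (i + 1)‖ ^ 2) := by
    rw [hdecay i]
    field_simp
  refine ⟨fun i => ⟨hr_nonneg i, (hr_eq i).le⟩, ?_⟩
  have hsummable : Summable r := summable_of_le_mul_sub_succ (by positivity)
    (fun i => by positivity) hr_nonneg fun i => (hr_eq i).le
  simpa [r] using hsummable.tendsto_atTop_zero.neg

/-- Peaceman–Rachford error decay: if `M` is dissipative with `μI − M` bijective,
`N` is bounded skew-symmetric, `z` solves `(M+N)z = g`, and `zⁱ⁺¹ = F(zⁱ)` is the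
Peaceman–Rachford iteration, then with `Δfⁱ = (μI − M)(z − zⁱ)` one has
`0 ≤ −Re⟨Δzⁱ, MΔzⁱ⟩ ≤ (1/(4μ))(‖Δfⁱ‖² − ‖Δfⁱ⁺¹‖²)`; consequently
`Re⟨Δzⁱ, MΔzⁱ⟩ → 0` as `i → ∞`. -/
theorem stmt7 {Z : Type*} [NormedAddCommGroup Z] [InnerProductSpace ℂ Z]
    [CompleteSpace Z]
    (dom : Submodule ℂ Z) (M : dom →ₗ[ℂ] Z) (N : Z →L[ℂ] Z) (g : Z)
    (μ : ℝ) (hμ : 0 < μ)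
    (hdiss : ∀ x : dom, (inner ℂ ((x : Z)) (M x) : ℂ).re ≤ 0)
    (hskew : ∀ x y : Z, (inner ℂ (N x) y : ℂ) = -(inner ℂ x (N y) : ℂ))
    (Minv : Z → dom)
    (hMinv : ∀ y : Z, (μ : ℂ) • ((Minv y : dom) : Z) - M (Minv y) = y)
    (hMinv' : ∀ x : dom, Minv ((μ : ℂ) • (x : Z) - M x) = x)
    (Ninv : Z → Z)
    (hNinv : ∀ y : Z, (μ : ℂ) • (Ninv y) - N (Ninv y) = y)
    (hNinv' : ∀ x : Z, Ninv ((μ : ℂ) • x - N x) = x)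
    (z : dom) (hz : M z + N z = g)
    (zseq : ℕ → dom)
    (hiter : ∀ i : ℕ, zseq (i + 1) =
      Minv (((μ : ℂ) • Ninv ((μ : ℂ) • ((zseq i : dom) : Z) + M (zseq i))
            + N (Ninv ((μ : ℂ) • ((zseq i : dom) : Z) + M (zseq i))))
          - (((μ : ℂ) • Ninv g + N (Ninv g)) + g))) :
    (∀ i : ℕ,
        0 ≤ -(inner ℂ (((z - zseq i : dom) : Z)) (M (z - zseq i)) : ℂ).re ∧
        -(inner ℂ (((z - zseq i : dom) : Z)) (M (z - zseq i)) : ℂ).re ≤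
          (1 / (4 * μ)) *
            (‖deltaF M μ z zseq i‖ ^ 2 - ‖deltaF M μ z zseq (i + 1)‖ ^ 2)) ∧
      Tendsto (fun i => (inner ℂ (((z - zseq i : dom) : Z)) (M (z - zseq i)) : ℂ).re)
        atTop (nhds 0) :=
  stmt7_general dom M N g μ hμ hdiss hskew Minv hMinv Ninv hNinv z hz zseq hiter
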